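/- arXiv:2011.07769 — 3 statements merged into one kernel-verified Lean document; each statement's English description precedes it below -/
import Mathlib

section
/- Let L ∈ ℝ^{N×N} be a Laplacian matrix and let k be an index with ℓ_kk > 0. Then L^(k) − (1/ℓ_kk) · L(:,k) L(k,:) = (1/2) ∑_{i ≠ k, j ≠ k} (ℓ_ki ℓ_kj / ℓ_kk) · b_ij b_ijᵀ, and this matrix is itself a Laplacian matrix (the graph Laplacian of the clique among the neighbors of k, where the edge between neighbors i and j carries weight ℓ_ki ℓ_kj / ℓ_kk ≥ 0). -/
open Matrix Finset

/-- A matrix `L` is a Laplacian matrix if it is symmetric, every row sums to zero,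
and off-diagonal entries are non-positive. -/
def IsLaplacian {N : ℕ} (L : Matrix (Fin N) (Fin N) ℝ) : Prop :=
  L.IsSymm ∧ (∀ i, ∑ j, L i j = 0) ∧ ∀ i j, i ≠ j → L i j ≤ 0

/-- The matrix `b_ij b_ijᵀ` where `b_ij = e_i - e_j` is the difference of two
standard basis vectors. -/
noncomputable def edgeMatrix {N : ℕ} (i j : Fin N) : Matrix (Fin N) (Fin N) ℝ :=
  Matrix.vecMulVec (Pi.single i 1 - Pi.single j 1) (Pi.single i 1 - Pi.single j 1)

/-- `L^(k) = ∑_{i ≠ k} (−ℓ_ki) · b_ki b_kiᵀ`. -/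
noncomputable def starLaplacian {N : ℕ} (L : Matrix (Fin N) (Fin N) ℝ) (k : Fin N) :
    Matrix (Fin N) (Fin N) ℝ :=
  ∑ i ∈ Finset.univ.filter (· ≠ k), (-(L k i)) • edgeMatrix k i

/-!
Write `r = L k` (row `k`, which is also column `k` by symmetry), `d = ℓ_kk`, `e = e_k`, and
`w = r - d e` for the off-diagonal part of the row, so that `∑ w = -d`. As `∑ r = 0`, expanding
the rank-one matrices gives `L^(k) = e rᵀ + r eᵀ - diag r`, and substituting `r = w + d e` turns
`L^(k) - d⁻¹ r rᵀ` into `-diag w - d⁻¹ w wᵀ`. On the other side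
`∑_{i,j} w_i w_j b_ij b_ijᵀ = 2 (∑ w) diag w - 2 w wᵀ`, which yields the same matrix. It is a
Laplacian: row `a` sums to `-w_a - d⁻¹ w_a ∑ w = 0`, and the off-diagonal entries `-w_a w_b / d`
are nonpositive because `w ≤ 0 < d`.
-/

section

variable {N : ℕ}

lemma sum_smul_edgeMatrix (k : Fin N) (u : Fin N → ℝ) :
    ∑ i, u i • edgeMatrix k i =
      (∑ i, u i) • vecMulVec (Pi.single k 1) (Pi.single k 1) - vecMulVec (Pi.single k 1) u
        - vecMulVec u (Pi.single k 1) + diagonal u := by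
  ext a b
  simp only [edgeMatrix, Matrix.sum_apply, Matrix.smul_apply, vecMulVec_apply, Pi.sub_apply,
    Pi.single_apply, diagonal_apply, Matrix.add_apply, Matrix.sub_apply, smul_eq_mul]
  by_cases ha : a = k <;> by_cases hb : b = k <;> by_cases hab : a = b <;> subst_vars <;>
    simp_all [mul_sub, Finset.sum_sub_distrib, eq_comm]

lemma sum_sum_mul_smul_edgeMatrix (u : Fin N → ℝ) :
    ∑ i, ∑ j, (u i * u j) • edgeMatrix i j =
      (2 * ∑ i, u i) • diagonal u - (2 : ℝ) • vecMulVec u u := by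
  simp_rw [mul_smul, ← Finset.smul_sum, sum_smul_edgeMatrix]
  ext a b
  simp only [Matrix.sum_apply, Matrix.smul_apply, vecMulVec_apply, Pi.single_apply,
    diagonal_apply, Matrix.add_apply, Matrix.sub_apply, smul_eq_mul, mul_add, mul_sub,
    Finset.sum_add_distrib, Finset.sum_sub_distrib, mul_ite, ite_mul, mul_one, mul_zero,
    zero_mul, Finset.sum_ite_eq, Finset.mem_univ, if_true]
  split_ifs with hab
  · subst hab; rw [← Finset.sum_mul]; ring
  · rw [Finset.sum_const_zero]; ring

lemma starLaplacian_eq (L : Matrix (Fin N) (Fin N) ℝ) (k : Fin N) (hrow : ∑ j, L k j = 0) :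
    starLaplacian L k =
      vecMulVec (Pi.single k 1) (L k) + vecMulVec (L k) (Pi.single k 1) - diagonal (L k) := by
  rw [starLaplacian, Finset.sum_filter_of_ne (by rintro i - h rfl; simp [edgeMatrix] at h),
    sum_smul_edgeMatrix]
  simp only [Finset.sum_neg_distrib, hrow, neg_zero, zero_smul, zero_sub]
  ext a b
  simp only [Matrix.add_apply, Matrix.sub_apply, Matrix.neg_apply, vecMulVec_apply,
    diagonal_apply]
  split_ifs <;> ring

noncomputable def offDiagRow (L : Matrix (Fin N) (Fin N) ℝ) (k : Fin N) : Fin N → ℝ :=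
  L k - Pi.single k (L k k)

lemma offDiagRow_apply (L : Matrix (Fin N) (Fin N) ℝ) (k i : Fin N) :
    offDiagRow L k i = if i = k then 0 else L k i := by
  split_ifs with hi
  · subst hi; simp [offDiagRow]
  · simp [offDiagRow, hi]

lemma sum_offDiagRow (L : Matrix (Fin N) (Fin N) ℝ) (k : Fin N) (hrow : ∑ j, L k j = 0) :
    ∑ i, offDiagRow L k i = -L k k := by
  simp [offDiagRow, Finset.sum_sub_distrib, hrow]

lemma starLaplacian_sub_vecMulVec_eq (L : Matrix (Fin N) (Fin N) ℝ) (k : Fin N) (hsym : L.IsSymm)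
    (hrow : ∑ j, L k j = 0) (hk : L k k ≠ 0) :
    starLaplacian L k - (L k k)⁻¹ • vecMulVec (fun i => L i k) (L k) =
      -diagonal (offDiagRow L k) - (L k k)⁻¹ • vecMulVec (offDiagRow L k) (offDiagRow L k) := by
  have hcol : (fun i => L i k) = L k := funext fun i => hsym.apply k i
  rw [starLaplacian_eq L k hrow, hcol]
  ext a b
  simp only [Matrix.sub_apply, Matrix.add_apply, Matrix.smul_apply, smul_eq_mul, diagonal_neg,
    diagonal_apply, vecMulVec_apply, Pi.single_apply, offDiagRow_apply,
    ite_mul, mul_ite, one_mul, mul_one, zero_mul, mul_zero]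
  split_ifs <;> subst_vars <;> first | contradiction | (field_simp; ring)

lemma half_smul_sum_filter_edgeMatrix_eq (L : Matrix (Fin N) (Fin N) ℝ) (k : Fin N)
    (hrow : ∑ j, L k j = 0) (hk : L k k ≠ 0) :
    (1 / 2 : ℝ) • ∑ i ∈ Finset.univ.filter (· ≠ k), ∑ j ∈ Finset.univ.filter (· ≠ k),
        (L k i * L k j / L k k) • edgeMatrix i j =
      -diagonal (offDiagRow L k) - (L k k)⁻¹ • vecMulVec (offDiagRow L k) (offDiagRow L k) := by
  have hsum : ∑ i ∈ Finset.univ.filter (· ≠ k), ∑ j ∈ Finset.univ.filter (· ≠ k),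
      (L k i * L k j / L k k) • edgeMatrix i j =
        (L k k)⁻¹ • ∑ i, ∑ j, (offDiagRow L k i * offDiagRow L k j) • edgeMatrix i j := by
    simp_rw [Finset.sum_filter, Finset.smul_sum, offDiagRow_apply]
    refine Finset.sum_congr rfl fun i _ => ?_
    by_cases hi : i = k
    · simp [hi]
    · simp only [ne_eq, hi, not_false_eq_true, if_true, if_false]
      refine Finset.sum_congr rfl fun j _ => ?_
      by_cases hj : j = k
      · simp [hj]
      · simp [hj, smul_smul, div_eq_inv_mul]
  rw [hsum, sum_sum_mul_smul_edgeMatrix, sum_offDiagRow L k hrow]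
  match_scalars <;> field_simp

lemma isLaplacian_neg_diagonal_sub_smul_vecMulVec {w : Fin N → ℝ} {d : ℝ} (hd : 0 < d)
    (hw : ∀ i, w i ≤ 0) (hsum : ∑ i, w i = -d) :
    IsLaplacian (-diagonal w - d⁻¹ • vecMulVec w w) := by
  refine ⟨?_, fun a => ?_, fun a b hab => ?_⟩
  · ext a b
    simp only [transpose_apply, Matrix.sub_apply, Matrix.neg_apply, Matrix.smul_apply,
      vecMulVec_apply, diagonal_apply, eq_comm (a := b), mul_comm (w b)]
    split_ifs with hab <;> simp [hab]
  · simp only [Matrix.sub_apply, Matrix.neg_apply, Matrix.smul_apply, smul_eq_mul,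
      diagonal_apply, vecMulVec_apply, Finset.sum_sub_distrib, Finset.sum_neg_distrib,
      Finset.sum_ite_eq, Finset.mem_univ, if_true, ← Finset.mul_sum, hsum]
    field_simp
    ring
  · simp only [Matrix.sub_apply, Matrix.neg_apply, diagonal_apply_ne _ hab, Matrix.smul_apply,
      vecMulVec_apply, smul_eq_mul, neg_zero, zero_sub, neg_nonpos]
    exact mul_nonneg (inv_nonneg.2 hd.le) (mul_nonneg_of_nonpos_of_nonpos (hw a) (hw b))

end

/-- The clique identity: `L^(k) − (1/ℓ_kk) · L(:,k) L(k,:)` equals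
`(1/2) ∑_{i ≠ k, j ≠ k} (ℓ_ki ℓ_kj / ℓ_kk) · b_ij b_ijᵀ`, the graph Laplacian of the
clique among the neighbors of `k`; in particular this matrix is a Laplacian matrix. -/
theorem clique_update {N : ℕ} (L : Matrix (Fin N) (Fin N) ℝ)
    (hL : IsLaplacian L) (k : Fin N) (hk : 0 < L k k) :
    starLaplacian L k - (L k k)⁻¹ • Matrix.vecMulVec (fun i => L i k) (L k)
      = (1 / 2 : ℝ) •
        ∑ i ∈ Finset.univ.filter (· ≠ k), ∑ j ∈ Finset.univ.filter (· ≠ k),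
          (L k i * L k j / L k k) • edgeMatrix i j ∧
    IsLaplacian
      (starLaplacian L k - (L k k)⁻¹ • Matrix.vecMulVec (fun i => L i k) (L k)) := by
  obtain ⟨hsym, hrow, hoff⟩ := hL
  have hw : ∀ i, offDiagRow L k i ≤ 0 := fun i => by
    rw [offDiagRow_apply]
    split_ifs with hi
    exacts [le_rfl, hoff k i (Ne.symm hi)]
  rw [starLaplacian_sub_vecMulVec_eq L k hsym (hrow k) hk.ne']
  exact ⟨(half_smul_sum_filter_edgeMatrix_eq L k (hrow k) hk.ne').symm,
    isLaplacian_neg_diagonal_sub_smul_vecMulVec hk hw (sum_offDiagRow L k (hrow k))⟩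
end

section
/- Let L ∈ ℝ^{N×N} be an irreducible Laplacian matrix with N > 1 and let k be an index (so ℓ_kk > 0). Then the principal submatrix of the Schur-complement update L − (1/ℓ_kk) · L(:,k) L(k,:) obtained by deleting row k and column k is an irreducible Laplacian matrix of size (N−1)×(N−1). -/
open Matrix Finset

/-- A symmetric matrix is irreducible if there is no nonempty proper subset `S` of the index
set with `L i j = 0` for all `i ∈ S` and `j ∉ S`. -/
def IsIrreducibleMat {N : ℕ} (L : Matrix (Fin N) (Fin N) ℝ) : Prop :=
  ¬ ∃ S : Set (Fin N), S.Nonempty ∧ S ≠ Set.univ ∧ ∀ i ∈ S, ∀ j ∉ S, L i j = 0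

/-!
Since `ℓ_kk ≥ 0`, the correction `ℓ_ik ℓ_kj / ℓ_kk` is nonnegative, so the updated off-diagonal
entries stay nonpositive, and the row sums of the update vanish because row `k` of `L` sums to
zero. If `L` is irreducible then `ℓ_kk > 0` (otherwise row `k` vanishes and `{k}` is a cut), so an
off-diagonal entry of the update vanishes only when both `ℓ_ij` and `ℓ_ik ℓ_kj` do. Hence a cut `S`
of the update lifts to a cut of `L`: the image of `S`, together with `k` when `k` is adjacent to
`S` in `L`.
-/

/-- For `L k k = 0` this is the principal submatrix, since `0⁻¹ = 0` in `ℝ`. -/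
noncomputable def schurUpdate {n : ℕ} (L : Matrix (Fin (n + 1)) (Fin (n + 1)) ℝ) (k : Fin (n + 1)) :
    Matrix (Fin n) (Fin n) ℝ :=
  (L - (L k k)⁻¹ • vecMulVec (fun i => L i k) (L k)).submatrix k.succAbove k.succAbove

lemma schurUpdate_apply {n : ℕ} (L : Matrix (Fin (n + 1)) (Fin (n + 1)) ℝ) (k : Fin (n + 1))
    (i j : Fin n) :
    schurUpdate L k i j = L (k.succAbove i) (k.succAbove j)
      - (L k k)⁻¹ * (L (k.succAbove i) k * L k (k.succAbove j)) := by
  simp [schurUpdate, vecMulVec_apply]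

namespace IsLaplacian

variable {n : ℕ} {L : Matrix (Fin (n + 1)) (Fin (n + 1)) ℝ}

lemma apply_comm (hL : IsLaplacian L) (i j : Fin (n + 1)) : L i j = L j i :=
  hL.1.apply j i

lemma sum_succAbove (hL : IsLaplacian L) (i k : Fin (n + 1)) :
    ∑ j, L i (k.succAbove j) = -L i k := by
  have h := hL.2.1 i
  rw [Fin.sum_univ_succAbove _ k] at h
  linarith

lemma diag_nonneg (hL : IsLaplacian L) (k : Fin (n + 1)) : 0 ≤ L k k := by
  have hoff : ∑ j, L k (k.succAbove j) ≤ 0 :=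
    sum_nonpos fun j _ => hL.2.2 k _ (Fin.succAbove_ne k j).symm
  linarith [hL.sum_succAbove k k]

lemma apply_eq_zero_of_diag_eq_zero (hL : IsLaplacian L) {k : Fin (n + 1)} (hkk : L k k = 0)
    (j : Fin n) : L k (k.succAbove j) = 0 :=
  (sum_eq_zero_iff_of_nonpos fun j _ => hL.2.2 k _ (Fin.succAbove_ne k j).symm).mp
    (by linarith [hL.sum_succAbove k k]) j (mem_univ j)

lemma diag_pos (hL : IsLaplacian L) (hirr : IsIrreducibleMat L) {j k : Fin (n + 1)}
    (hjk : j ≠ k) : 0 < L k k := by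
  refine (hL.diag_nonneg k).lt_of_ne fun hkk => hirr
    ⟨{k}, Set.singleton_nonempty k, (Set.ne_univ_iff_exists_notMem _).mpr ⟨j, hjk⟩, ?_⟩
  rintro i rfl m hm
  obtain ⟨m, rfl⟩ := Fin.exists_succAbove_eq hm
  exact hL.apply_eq_zero_of_diag_eq_zero hkk.symm m

lemma apply_succAbove_nonpos (hL : IsLaplacian L) (k : Fin (n + 1)) {i j : Fin n} (hij : i ≠ j) :
    L (k.succAbove i) (k.succAbove j) ≤ 0 :=
  hL.2.2 _ _ (Fin.succAbove_right_injective.ne hij)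

lemma schurUpdate_correction_nonneg (hL : IsLaplacian L) (k : Fin (n + 1)) (i j : Fin n) :
    0 ≤ (L k k)⁻¹ * (L (k.succAbove i) k * L k (k.succAbove j)) :=
  mul_nonneg (inv_nonneg.mpr (hL.diag_nonneg k))
    (mul_nonneg_of_nonpos_of_nonpos (hL.2.2 _ _ (Fin.succAbove_ne k i))
      (hL.2.2 _ _ (Fin.succAbove_ne k j).symm))

lemma schurUpdate_eq_zero (hL : IsLaplacian L) {k : Fin (n + 1)} (hkk : 0 < L k k)
    {i j : Fin n} (hij : i ≠ j) (h : schurUpdate L k i j = 0) :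
    L (k.succAbove i) (k.succAbove j) = 0 ∧ L (k.succAbove i) k * L k (k.succAbove j) = 0 := by
  rw [schurUpdate_apply] at h
  have hle := hL.apply_succAbove_nonpos k hij
  have hge := hL.schurUpdate_correction_nonneg k i j
  refine ⟨by linarith, ?_⟩
  exact (mul_eq_zero.mp (by linarith : (L k k)⁻¹ * _ = 0)).resolve_left (inv_pos.mpr hkk).ne'

protected lemma schurUpdate (hL : IsLaplacian L) (k : Fin (n + 1)) :
    IsLaplacian (schurUpdate L k) := by
  refine ⟨IsSymm.ext fun i j => ?_, fun i => ?_, fun i j hij => ?_⟩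
  · rw [schurUpdate_apply, schurUpdate_apply, hL.apply_comm (k.succAbove i),
      hL.apply_comm (k.succAbove i) k, hL.apply_comm k (k.succAbove j)]
    ring
  · simp only [schurUpdate_apply, sum_sub_distrib, ← mul_sum, hL.sum_succAbove]
    rcases (hL.diag_nonneg k).eq_or_lt with hkk | hkk
    · rw [hL.apply_comm, hL.apply_eq_zero_of_diag_eq_zero hkk.symm]
      ring
    · field_simp
      ring
  · rw [schurUpdate_apply]
    linarith [hL.apply_succAbove_nonpos k hij, hL.schurUpdate_correction_nonneg k i j]

end IsLaplacian

section SuccAboveLift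

variable {n : ℕ} {k : Fin (n + 1)} {p : Prop} {S : Set (Fin n)}

/-- The image of `S` under `k.succAbove`, with `k` added iff `p`. -/
def succAboveLift (k : Fin (n + 1)) (p : Prop) (S : Set (Fin n)) : Set (Fin (n + 1)) :=
  {x | Fin.insertNth (α := fun _ => Prop) k p (· ∈ S) x}

@[simp]
lemma mem_succAboveLift_self : k ∈ succAboveLift k p S ↔ p := by
  simp [succAboveLift, Fin.insertNth_apply_same]

@[simp]
lemma succAbove_mem_succAboveLift {i : Fin n} : k.succAbove i ∈ succAboveLift k p S ↔ i ∈ S := by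
  simp [succAboveLift, Fin.insertNth_apply_succAbove]

lemma apply_eq_zero_of_mem_succAboveLift_of_notMem {L : Matrix (Fin (n + 1)) (Fin (n + 1)) ℝ}
    (hS : ∀ i ∈ S, ∀ j ∉ S, L (k.succAbove i) (k.succAbove j) = 0)
    (hp : p → ∀ j ∉ S, L k (k.succAbove j) = 0) (hnp : ¬p → ∀ i ∈ S, L (k.succAbove i) k = 0)
    {i j : Fin (n + 1)} (hi : i ∈ succAboveLift k p S) (hj : j ∉ succAboveLift k p S) :
    L i j = 0 := by
  induction i using Fin.succAboveCases k <;> induction j using Fin.succAboveCases k <;>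
    simp_all

end SuccAboveLift

lemma IsIrreducibleMat.schurUpdate {n : ℕ} {L : Matrix (Fin (n + 1)) (Fin (n + 1)) ℝ}
    (hL : IsLaplacian L) (hirr : IsIrreducibleMat L) (k : Fin (n + 1)) :
    IsIrreducibleMat (schurUpdate L k) := by
  rintro ⟨S, ⟨i₀, hi₀⟩, hS, hcut⟩
  obtain ⟨j₀, hj₀⟩ := (Set.ne_univ_iff_exists_notMem S).mp hS
  have hkk := hL.diag_pos hirr (Fin.succAbove_ne k i₀)
  have hcut' : ∀ i ∈ S, ∀ j ∉ S, L (k.succAbove i) (k.succAbove j) = 0 ∧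
      L (k.succAbove i) k * L k (k.succAbove j) = 0 := fun i hi j hj =>
    hL.schurUpdate_eq_zero hkk (ne_of_mem_of_not_mem hi hj) (hcut i hi j hj)
  refine hirr ⟨succAboveLift k (∃ i ∈ S, L (k.succAbove i) k ≠ 0) S,
    ⟨k.succAbove i₀, succAbove_mem_succAboveLift.mpr hi₀⟩,
    (Set.ne_univ_iff_exists_notMem _).mpr ⟨k.succAbove j₀, succAbove_mem_succAboveLift.not.mpr hj₀⟩,
    fun i hi j hj => apply_eq_zero_of_mem_succAboveLift_of_notMem
      (fun i hi j hj => (hcut' i hi j hj).1) ?_ ?_ hi hj⟩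
  · rintro ⟨i, hi, hik⟩ j hj
    exact (mul_eq_zero.mp (hcut' i hi j hj).2).resolve_left hik
  · exact fun h i hi => by_contra fun hik => h ⟨i, hi, hik⟩

theorem schur_update_irreducible_laplacian_general {n : ℕ}
    (L : Matrix (Fin (n + 1)) (Fin (n + 1)) ℝ)
    (hL : IsLaplacian L) (hirr : IsIrreducibleMat L) (k : Fin (n + 1)) :
    IsLaplacian
      ((L - (L k k)⁻¹ • Matrix.vecMulVec (fun i => L i k) (L k)).submatrix
        k.succAbove k.succAbove) ∧
    IsIrreducibleMat
      ((L - (L k k)⁻¹ • Matrix.vecMulVec (fun i => L i k) (L k)).submatrix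
        k.succAbove k.succAbove) :=
  ⟨hL.schurUpdate k, hirr.schurUpdate hL k⟩

/-- For an irreducible Laplacian matrix `L` of size `N = n + 1 > 1` and an index `k`,
the principal submatrix of the Schur-complement update `L − (1/ℓ_kk) L(:,k) L(k,:)`
obtained by deleting row `k` and column `k` is an irreducible Laplacian matrix of size
`(N−1) × (N−1)`. -/
theorem schur_update_irreducible_laplacian {n : ℕ} (hn : 1 ≤ n)
    (L : Matrix (Fin (n + 1)) (Fin (n + 1)) ℝ)
    (hL : IsLaplacian L) (hirr : IsIrreducibleMat L) (k : Fin (n + 1)) :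
    IsLaplacian
      ((L - (L k k)⁻¹ • Matrix.vecMulVec (fun i => L i k) (L k)).submatrix
        k.succAbove k.succAbove) ∧
    IsIrreducibleMat
      ((L - (L k k)⁻¹ • Matrix.vecMulVec (fun i => L i k) (L k)).submatrix
        k.succAbove k.succAbove) :=
  schur_update_irreducible_laplacian_general L hL hirr k
end

section
/- Let L ∈ ℝ^{N×N} be an irreducible Laplacian matrix with N > 1, let k be an index, let 𝒩 = {i ≠ k : ℓ_ki ≠ 0} be the set of neighbors of k, and let L^(k) = ∑_{i ∈ 𝒩} (−ℓ_ki) · b_ki b_kiᵀ. Let C = ∑_{{i,j} ∈ E} w_ij · b_ij b_ijᵀ where E is the edge set of a connected graph on the vertex set 𝒩 and all weights w_ij are positive. Then the principal submatrix of L − L^(k) + C obtained by deleting row k and column k is an irreducible Laplacian matrix; in particular, its diagonal entries are strictly positive when N − 1 > 1. (This is why the randomized Cholesky factorization never breaks down: every pivot ℓ_kk encountered is strictly positive, and the final diagonal entry is zero.) -/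
open Matrix Finset
open scoped Classical

lemma edgeMatrix_apply {N : ℕ} (i j a b : Fin N) :
    edgeMatrix i j a b =
      ((if a = i then 1 else 0) - (if a = j then 1 else 0)) *
      ((if b = i then (1:ℝ) else 0) - (if b = j then 1 else 0)) := by
  simp [edgeMatrix, Matrix.vecMulVec_apply, Pi.single_apply]

lemma edgeMatrix_comm {N : ℕ} (i j a b : Fin N) :
    edgeMatrix i j a b = edgeMatrix i j b a := by
  rw [edgeMatrix_apply, edgeMatrix_apply]; ring

lemma edgeMatrix_row_sum {N : ℕ} (i j a : Fin N) : ∑ b, edgeMatrix i j a b = 0 := by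
  classical
  simp only [edgeMatrix_apply, ← Finset.mul_sum]
  rw [Finset.sum_sub_distrib]
  simp [Finset.sum_ite_eq']

lemma edgeMatrix_offdiag {N : ℕ} {i j a b : Fin N} (hab : a ≠ b) :
    edgeMatrix i j a b ≤ 0 := by
  rw [edgeMatrix_apply]
  split_ifs <;> norm_num <;> (exfalso; apply hab; subst_vars; rfl)

lemma edgeMatrix_pair {N : ℕ} {i j : Fin N} (h : i ≠ j) : edgeMatrix i j i j = -1 := by
  rw [edgeMatrix_apply]
  simp [h, h.symm]

/-- Breakdown-free step: let `L` be an irreducible Laplacian matrix of size `N = n + 1 > 1`,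
`k` an index with neighbor set `𝒩 = {i ≠ k : ℓ_ki ≠ 0}`,
`L^(k) = ∑_{i ∈ 𝒩} (−ℓ_ki) b_ki b_kiᵀ`, and `C = ∑_{{i,j} ∈ E} w_ij b_ij b_ijᵀ` where `E`
is the edge set of a connected graph on `𝒩` with positive weights. Then the principal
submatrix of `L − L^(k) + C` deleting row and column `k` is an irreducible Laplacian
matrix; in particular its diagonal entries are strictly positive when `N − 1 > 1`. -/
theorem sampled_schur_update_irreducible_laplacian {n : ℕ} (hn : 1 ≤ n)
    (L : Matrix (Fin (n + 1)) (Fin (n + 1)) ℝ)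
    (hL : IsLaplacian L) (hirr : IsIrreducibleMat L) (k : Fin (n + 1))
    (E : Finset (Fin (n + 1) × Fin (n + 1))) (w : Fin (n + 1) × Fin (n + 1) → ℝ)
    (hE : ∀ p ∈ E, (p.1 ≠ k ∧ L k p.1 ≠ 0) ∧ (p.2 ≠ k ∧ L k p.2 ≠ 0) ∧ p.1 ≠ p.2)
    (hw : ∀ p ∈ E, 0 < w p)
    (hconn : ∀ i j : Fin (n + 1), (i ≠ k ∧ L k i ≠ 0) → (j ≠ k ∧ L k j ≠ 0) →
      Relation.ReflTransGen (fun a b => (a, b) ∈ E ∨ (b, a) ∈ E) i j) :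
    IsLaplacian
      ((L - (∑ i ∈ Finset.univ.filter (fun i => i ≠ k ∧ L k i ≠ 0),
          (-(L k i)) • edgeMatrix k i)
        + ∑ p ∈ E, w p • edgeMatrix p.1 p.2).submatrix k.succAbove k.succAbove) ∧
    IsIrreducibleMat
      ((L - (∑ i ∈ Finset.univ.filter (fun i => i ≠ k ∧ L k i ≠ 0),
          (-(L k i)) • edgeMatrix k i)
        + ∑ p ∈ E, w p • edgeMatrix p.1 p.2).submatrix k.succAbove k.succAbove) ∧
    (1 < n → ∀ i,
      0 < ((L - (∑ i ∈ Finset.univ.filter (fun i => i ≠ k ∧ L k i ≠ 0),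
          (-(L k i)) • edgeMatrix k i)
        + ∑ p ∈ E, w p • edgeMatrix p.1 p.2).submatrix k.succAbove k.succAbove) i i) := by
  classical
  obtain ⟨hsym, hrow, hoff⟩ := hL
  set C : Matrix (Fin (n+1)) (Fin (n+1)) ℝ := ∑ p ∈ E, w p • edgeMatrix p.1 p.2 with hC
  set LK : Matrix (Fin (n+1)) (Fin (n+1)) ℝ :=
    ∑ i ∈ Finset.univ.filter (fun i => i ≠ k ∧ L k i ≠ 0), (-(L k i)) • edgeMatrix k i
    with hLKdef
  set M : Matrix (Fin (n+1)) (Fin (n+1)) ℝ := L - LK + C with hMdef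
  have hsym' : ∀ a b, L a b = L b a := fun a b => hsym.apply b a
  have hCnonpos : ∀ a b : Fin (n+1), a ≠ b → C a b ≤ 0 := by
    intro a b hab
    rw [hC, Matrix.sum_apply]
    refine Finset.sum_nonpos fun p hp => ?_
    rw [Matrix.smul_apply, smul_eq_mul]
    exact mul_nonpos_of_nonneg_of_nonpos (hw p hp).le (edgeMatrix_offdiag hab)
  have hCneg : ∀ a b : Fin (n+1), ((a, b) ∈ E ∨ (b, a) ∈ E) → C a b < 0 := by
    intro a b hab
    obtain ⟨hne, p, hp, hmain⟩ :
        a ≠ b ∧ ∃ p ∈ E, (w p • edgeMatrix p.1 p.2) a b < 0 := by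
      rcases hab with h | h
      · have hne : a ≠ b := (hE (a,b) h).2.2
        refine ⟨hne, (a,b), h, ?_⟩
        rw [Matrix.smul_apply, smul_eq_mul]
        have : edgeMatrix a b a b = -1 := edgeMatrix_pair hne
        rw [this]
        nlinarith [hw (a,b) h]
      · have hne : b ≠ a := (hE (b,a) h).2.2
        refine ⟨hne.symm, (b,a), h, ?_⟩
        rw [Matrix.smul_apply, smul_eq_mul, edgeMatrix_comm]
        have : edgeMatrix b a b a = -1 := edgeMatrix_pair hne
        rw [this]
        nlinarith [hw (b,a) h]
    rw [hC, Matrix.sum_apply, ← Finset.add_sum_erase _ _ hp]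
    have h2 : ∑ q ∈ E.erase p, (w q • edgeMatrix q.1 q.2) a b ≤ 0 :=
      Finset.sum_nonpos fun q hq => by
        rw [Matrix.smul_apply, smul_eq_mul]
        exact mul_nonpos_of_nonneg_of_nonpos
          (hw q (Finset.mem_of_mem_erase hq)).le (edgeMatrix_offdiag hne)
    linarith
  have hCk : ∀ a, C a k = 0 := by
    intro a
    rw [hC, Matrix.sum_apply]
    refine Finset.sum_eq_zero fun p hp => ?_
    obtain ⟨⟨h1k, -⟩, ⟨h2k, -⟩, -⟩ := hE p hp
    have e1 : (if k = p.1 then (1:ℝ) else 0) = 0 := if_neg (fun h => h1k h.symm)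
    have e2 : (if k = p.2 then (1:ℝ) else 0) = 0 := if_neg (fun h => h2k h.symm)
    rw [Matrix.smul_apply, smul_eq_mul, edgeMatrix_apply, e1, e2]
    ring
  have hLKoff : ∀ a b : Fin (n+1), a ≠ b → a ≠ k → b ≠ k → LK a b = 0 := by
    intro a b hab hak hbk
    rw [hLKdef, Matrix.sum_apply]
    refine Finset.sum_eq_zero fun i hi => ?_
    have e1 : (if a = k then (1:ℝ) else 0) = 0 := if_neg hak
    have e2 : (if b = k then (1:ℝ) else 0) = 0 := if_neg hbk
    rw [Matrix.smul_apply, smul_eq_mul, edgeMatrix_apply, e1, e2]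
    split_ifs with h1 h2
    · exact absurd (h1.trans h2.symm) hab
    · ring
    · ring
    · ring
  have hLKk : ∀ a, a ≠ k → LK a k = L a k := by
    intro a hak
    rw [hLKdef, Matrix.sum_apply]
    have hterm : ∀ i ∈ Finset.univ.filter (fun i => i ≠ k ∧ L k i ≠ 0),
        ((-(L k i)) • edgeMatrix k i) a k = if a = i then L k i else 0 := by
      intro i hi
      obtain ⟨hik, -⟩ := (Finset.mem_filter.mp hi).2
      have e1 : (if k = k then (1:ℝ) else 0) = 1 := if_pos rfl
      have e2 : (if k = i then (1:ℝ) else 0) = 0 := if_neg (fun h => hik h.symm)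
      have e3 : (if a = k then (1:ℝ) else 0) = 0 := if_neg hak
      rw [Matrix.smul_apply, smul_eq_mul, edgeMatrix_apply, e1, e2, e3]
      split_ifs with h <;> ring
    rw [Finset.sum_congr rfl hterm, Finset.sum_ite_eq]
    by_cases hmem : a ∈ Finset.univ.filter (fun i => i ≠ k ∧ L k i ≠ 0)
    · rw [if_pos hmem, hsym' a k]
    · rw [if_neg hmem]
      have h0 : L k a = 0 := by
        by_contra h
        exact hmem (Finset.mem_filter.mpr ⟨Finset.mem_univ a, hak, h⟩)
      rw [hsym' a k, h0]
  have hMoff : ∀ a b : Fin (n+1), a ≠ k → b ≠ k → a ≠ b → M a b = L a b + C a b := by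
    intro a b hak hbk hab
    rw [hMdef, Matrix.add_apply, Matrix.sub_apply, hLKoff a b hab hak hbk]
    ring
  have hMk : ∀ a : Fin (n+1), a ≠ k → M a k = 0 := by
    intro a hak
    rw [hMdef, Matrix.add_apply, Matrix.sub_apply, hLKk a hak, hCk]
    ring
  have hMrow : ∀ a, ∑ b, M a b = 0 := by
    intro a
    have hLKr : ∑ b, LK a b = 0 := by
      rw [hLKdef]
      simp only [Matrix.sum_apply, Matrix.smul_apply, smul_eq_mul]
      rw [Finset.sum_comm]
      refine Finset.sum_eq_zero fun i _ => ?_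
      rw [← Finset.mul_sum, edgeMatrix_row_sum, mul_zero]
    have hCr : ∑ b, C a b = 0 := by
      rw [hC]
      simp only [Matrix.sum_apply, Matrix.smul_apply, smul_eq_mul]
      rw [Finset.sum_comm]
      refine Finset.sum_eq_zero fun p _ => ?_
      rw [← Finset.mul_sum, edgeMatrix_row_sum, mul_zero]
    have : ∑ b, M a b = (∑ b, L a b) - (∑ b, LK a b) + ∑ b, C a b := by
      rw [hMdef]
      simp [Matrix.sub_apply, Matrix.add_apply, Finset.sum_add_distrib,
        Finset.sum_sub_distrib]
    rw [this, hrow, hLKr, hCr]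
    ring
  have hMsym : ∀ a b, M a b = M b a := by
    intro a b
    have e1 : LK a b = LK b a := by
      rw [hLKdef]
      simp only [Matrix.sum_apply, Matrix.smul_apply, smul_eq_mul]
      exact Finset.sum_congr rfl fun i _ => by rw [edgeMatrix_comm]
    have e2 : C a b = C b a := by
      rw [hC]
      simp only [Matrix.sum_apply, Matrix.smul_apply, smul_eq_mul]
      exact Finset.sum_congr rfl fun p _ => by rw [edgeMatrix_comm]
    rw [hMdef, Matrix.add_apply, Matrix.sub_apply, Matrix.add_apply, Matrix.sub_apply,
      e1, e2, hsym' a b]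
  -- Laplacian property of the submatrix
  have hLap : IsLaplacian (M.submatrix k.succAbove k.succAbove) := by
    refine ⟨?_, ?_, ?_⟩
    · show (M.submatrix k.succAbove k.succAbove)ᵀ = M.submatrix k.succAbove k.succAbove
      ext i j
      simp only [Matrix.transpose_apply, Matrix.submatrix_apply]
      exact hMsym _ _
    · intro i
      have h := Fin.sum_univ_succAbove (fun j => M (k.succAbove i) j) k
      rw [hMrow (k.succAbove i), hMk _ (Fin.succAbove_ne k i)] at h
      simpa [Matrix.submatrix_apply] using h.symm
    · intro i j hij
      have hne : k.succAbove i ≠ k.succAbove j :=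
        fun h => hij (Fin.succAbove_right_injective h)
      rw [Matrix.submatrix_apply,
        hMoff _ _ (Fin.succAbove_ne k i) (Fin.succAbove_ne k j) hne]
      exact add_nonpos (hoff _ _ hne) (hCnonpos _ _ hne)
  -- Irreducibility of the submatrix
  have hIrr : IsIrreducibleMat (M.submatrix k.succAbove k.succAbove) := by
    rintro ⟨S, ⟨i0, hi0⟩, hSuniv, hcut⟩
    set S' : Set (Fin (n+1)) := k.succAbove '' S with hS'
    have hS'k : k ∉ S' := by
      rintro ⟨i, -, hi⟩
      exact Fin.succAbove_ne k i hi
    have hcut' : ∀ a b : Fin (n+1), a ∈ S' → b ≠ k → b ∉ S' → M a b = 0 := by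
      rintro a b ⟨i, hiS, rfl⟩ hbk hbS'
      obtain ⟨j, rfl⟩ := Fin.exists_succAbove_eq hbk
      simpa [Matrix.submatrix_apply] using
        hcut i hiS j (fun hjS => hbS' ⟨j, hjS, rfl⟩)
    have hLcut : ∀ a b : Fin (n+1), a ∈ S' → b ≠ k → b ∉ S' → L a b = 0 := by
      intro a b haS hbk hbS
      have hak : a ≠ k := fun h => hS'k (h ▸ haS)
      have hab : a ≠ b := fun h => hbS (h ▸ haS)
      have h0 := hcut' a b haS hbk hbS
      rw [hMoff a b hak hbk hab] at h0
      have h1 := hoff a b hab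
      have h2 := hCnonpos a b hab
      linarith
    by_cases hall : ∀ m, m ≠ k → L k m ≠ 0 → m ∈ S'
    · obtain ⟨j0, hj0⟩ : ∃ j0, j0 ∉ S := by
        by_contra h; push_neg at h
        exact hSuniv (Set.eq_univ_of_forall h)
      refine hirr ⟨S' ∪ {k}, ⟨k, Or.inr rfl⟩, ?_, ?_⟩
      · intro hU
        have hmem : k.succAbove j0 ∈ S' ∪ {k} := hU ▸ Set.mem_univ _
        rcases hmem with h | h
        · obtain ⟨i, hiS, hi⟩ := h
          exact hj0 (Fin.succAbove_right_injective hi ▸ hiS)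
        · exact Fin.succAbove_ne k j0 h
      · intro a ha b hb
        have hbk : b ≠ k := fun h => hb (Or.inr h)
        have hbS : b ∉ S' := fun h => hb (Or.inl h)
        rcases ha with ha | ha
        · exact hLcut a b ha hbk hbS
        · rw [Set.mem_singleton_iff] at ha
          subst ha
          by_contra h
          exact hbS (hall b hbk h)
    · push_neg at hall
      obtain ⟨m2, hm2k, hm2L, hm2S⟩ := hall
      by_cases hall2 : ∀ m, m ≠ k → L k m ≠ 0 → m ∉ S'
      · refine hirr ⟨S', ⟨k.succAbove i0, ⟨i0, hi0, rfl⟩⟩, ?_, ?_⟩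
        · intro hU
          exact hS'k (hU ▸ Set.mem_univ k)
        · intro a ha b hb
          have hak : a ≠ k := fun h => hS'k (h ▸ ha)
          rcases eq_or_ne b k with rfl | hbk
          · have h0 : L b a = 0 := by
              by_contra h
              exact (hall2 a hak h) ha
            rw [hsym' a b, h0]
          · exact hLcut a b ha hbk hb
      · push_neg at hall2
        obtain ⟨m1, hm1k, hm1L, hm1S⟩ := hall2
        have hpath := hconn m1 m2 ⟨hm1k, hm1L⟩ ⟨hm2k, hm2L⟩
        have cross : ∀ a b : Fin (n+1),
            Relation.ReflTransGen (fun a b => (a,b) ∈ E ∨ (b,a) ∈ E) a b →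
            a ∈ S' → b ∉ S' → False := by
          intro a b h
          induction h with
          | refl => exact fun ha hb => hb ha
          | @tail x y hax hstep ih =>
            intro ha hy
            by_cases hx : x ∈ S'
            · have hyk : y ≠ k := by
                rcases hstep with h | h
                · exact ((hE _ h).2.1).1
                · exact ((hE _ h).1).1
              have h0 := hcut' x y hx hyk hy
              have hxk : x ≠ k := fun h => hS'k (h ▸ hx)
              have hxy' : x ≠ y := fun h => hy (h ▸ hx)
              rw [hMoff x y hxk hyk hxy'] at h0
              have h1 := hoff x y hxy'
              have h2 := hCneg x y hstep
              linarith
            · exact ih ha hx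
        exact cross m1 m2 hpath hm1S hm2S
  refine ⟨hLap, hIrr, ?_⟩
  intro h1n i
  by_contra hpos
  push_neg at hpos
  have hrow' := hLap.2.1 i
  have hnp : ∀ j ∈ Finset.univ, (M.submatrix k.succAbove k.succAbove) i j ≤ 0 := by
    intro j _
    rcases eq_or_ne i j with rfl | hij
    · exact hpos
    · exact hLap.2.2 i j hij
  have hall0 : ∀ j, (M.submatrix k.succAbove k.succAbove) i j = 0 := fun j =>
    (Finset.sum_eq_zero_iff_of_nonpos hnp).mp hrow' j (Finset.mem_univ j)
  refine hIrr ⟨{i}, ⟨i, rfl⟩, ?_, ?_⟩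
  · intro hU
    have h2 : (⟨0, by omega⟩ : Fin n) ≠ (⟨1, by omega⟩ : Fin n) := by
      simp [Fin.ext_iff]
    have e0 : (⟨0, by omega⟩ : Fin n) ∈ ({i} : Set (Fin n)) := hU ▸ Set.mem_univ _
    have e1 : (⟨1, by omega⟩ : Fin n) ∈ ({i} : Set (Fin n)) := hU ▸ Set.mem_univ _
    rw [Set.mem_singleton_iff] at e0 e1
    exact h2 (e0.trans e1.symm)
  · intro a ha b hb
    rw [Set.mem_singleton_iff] at ha
    subst ha
    exact hall0 b
end
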